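/- arXiv:1810.04579 — 4 statements merged into one kernel-verified Lean document; each statement's English description precedes it below -/
import Mathlib

section
/- Any (λ, C)-quasi-isometric map c from a compact interval [a,b] to a geodesic metric space, whose endpoints satisfy d(c(a), c(b)) ≥ 2C, can be uniformly approximated up to distance 8C by a continuous map d : [a,b] → X with the same endpoints, which is a (λ, 17C)-quasi-isometric map and is moreover 2λ-Lipschitz. -/
/-!
Subdivide `[a, b]` into `N` pieces of length `h` with `C ≤ λ h ≤ 2 C`; this is possible because
`d(c a, c b) ≥ 2 C` forces `λ (b - a) ≥ C`. Joining consecutive points `c (a + i h)` by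
constant-speed geodesics gives a map of speed at most `(λ h + C) / h ≤ 2 λ` on each piece, hence
`2 λ`-Lipschitz. Every point is within `h` of a node, so this map stays within
`(λ h + C) + 2 λ h ≤ 7 C` of `c`, and the quasi-isometry constants follow from the triangle
inequality. When `C = 0`, `c` itself is already `λ`-Lipschitz.
-/

open Metric Set Real

noncomputable section

variable {X : Type*} [MetricSpace X]

/-- Gromov product (x,y)_w. -/
def gromovProd (x y w : X) : ℝ := (dist x w + dist y w - dist x y) / 2

/-- δ-hyperbolicity: four-point inequality for the Gromov product. -/
def IsHyperbolic (X : Type*) [MetricSpace X] (δ : ℝ) : Prop :=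
  ∀ x y z w : X, min (gromovProd x y w) (gromovProd y z w) - δ ≤ gromovProd x z w

/-- `G` is a geodesic segment between `x` and `y`. -/
def GeodesicSegmentBetween (G : Set X) (x y : X) : Prop :=
  ∃ f : ℝ → X, f 0 = x ∧ f (dist x y) = y ∧
    (∀ s ∈ Icc (0:ℝ) (dist x y), ∀ t ∈ Icc (0:ℝ) (dist x y), dist (f s) (f t) = |s - t|) ∧
    G = f '' Icc (0:ℝ) (dist x y)

/-- A geodesic metric space: any two points are joined by a geodesic segment. -/
def GeodesicSpace (X : Type*) [MetricSpace X] : Prop :=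
  ∀ x y : X, ∃ G : Set X, GeodesicSegmentBetween G x y

/-- `(λ, C)`-quasi-isometric map on a set of reals. -/
def QuasiIsometryOn (lam C : ℝ) (s : Set ℝ) (f : ℝ → X) : Prop :=
  1 ≤ lam ∧ 0 ≤ C ∧ ∀ x ∈ s, ∀ y ∈ s,
    lam⁻¹ * |y - x| - C ≤ dist (f x) (f y) ∧ dist (f x) (f y) ≤ lam * |y - x| + C

/-- `K`-quasiconvexity of a subset. -/
def Quasiconvex (K : ℝ) (Y : Set X) : Prop :=
  ∀ y₁ ∈ Y, ∀ y₂ ∈ Y, ∃ G : Set X, GeodesicSegmentBetween G y₁ y₂ ∧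
    ∀ z ∈ G, infDist z Y ≤ K

/-- `p` is a closest-point projection of `x` on `Y`. -/
def ProjOn (p x : X) (Y : Set X) : Prop := p ∈ Y ∧ dist x p = infDist x Y

open scoped NNReal

theorem LipschitzOnWith.Icc_union_Icc {Y : Type*} [PseudoMetricSpace Y] {f : ℝ → Y} {K : ℝ≥0}
    {u v w : ℝ} (h₁ : LipschitzOnWith K f (Icc u v)) (h₂ : LipschitzOnWith K f (Icc v w)) :
    LipschitzOnWith K f (Icc u w) := by
  have key : ∀ x ∈ Icc u w, ∀ y ∈ Icc u w, x ≤ y → dist (f x) (f y) ≤ K * dist x y := by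
    intro x hx y hy hxy
    by_cases hyv : y ≤ v
    · exact h₁.dist_le_mul x ⟨hx.1, hxy.trans hyv⟩ y ⟨hx.1.trans hxy, hyv⟩
    by_cases hvx : v ≤ x
    · exact h₂.dist_le_mul x ⟨hvx, hxy.trans hy.2⟩ y ⟨hvx.trans hxy, hy.2⟩
    push Not at hyv hvx
    calc dist (f x) (f y) ≤ dist (f x) (f v) + dist (f v) (f y) := dist_triangle _ _ _
      _ ≤ K * dist x v + K * dist v y :=
          add_le_add (h₁.dist_le_mul x ⟨hx.1, hvx.le⟩ v ⟨hx.1.trans hvx.le, le_rfl⟩)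
            (h₂.dist_le_mul v ⟨le_rfl, hyv.le.trans hy.2⟩ y ⟨hyv.le, hy.2⟩)
      _ = K * dist x y := by
          rw [Real.dist_eq, Real.dist_eq, Real.dist_eq, abs_of_neg (by linarith),
            abs_of_neg (by linarith), abs_of_neg (by linarith)]
          ring
  refine LipschitzOnWith.of_dist_le_mul fun x hx y hy => ?_
  rcases le_total x y with hxy | hyx
  · exact key x hx y hy hxy
  · rw [dist_comm, dist_comm x]
    exact key y hy x hx hyx

theorem LipschitzOnWith.Icc_of_forall_Icc_succ {Y : Type*} [PseudoMetricSpace Y] {f : ℝ → Y}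
    {K : ℝ≥0} {t : ℕ → ℝ} {N : ℕ} (h : ∀ i < N, LipschitzOnWith K f (Icc (t i) (t (i + 1)))) :
    LipschitzOnWith K f (Icc (t 0) (t N)) := by
  induction N with
  | zero =>
    refine LipschitzOnWith.of_dist_le_mul fun x hx y hy => ?_
    rw [Icc_self, mem_singleton_iff] at hx hy
    simp [hx, hy]
  | succ n ih =>
    exact (ih fun i hi => h i (hi.trans n.lt_succ_self)).Icc_union_Icc (h n n.lt_succ_self)

theorem exists_nat_div_mem_Icc {C L : ℝ} (hC : 0 < C) (hL : C ≤ L) :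
    ∃ N : ℕ, 0 < N ∧ C ≤ L / N ∧ L / N ≤ 2 * C := by
  have hLC : 1 ≤ L / C := (one_le_div hC).2 hL
  set N := ⌊L / C⌋₊
  have hN : 1 ≤ N := Nat.le_floor (by exact_mod_cast hLC)
  have hNR : (1 : ℝ) ≤ N := by exact_mod_cast hN
  have hNle : (N : ℝ) * C ≤ L := (le_div_iff₀ hC).1 (Nat.floor_le (by linarith))
  have hNgt : L < (N + 1) * C := (div_lt_iff₀ hC).1 (Nat.lt_floor_add_one _)
  refine ⟨N, hN, (le_div_iff₀ (by linarith)).2 (by linarith), (div_le_iff₀ (by linarith)).2 ?_⟩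
  nlinarith

theorem exists_nat_le_mem_Icc {a h x : ℝ} (hh : 0 < h) {N : ℕ} (hx : x ∈ Icc a (a + N * h)) :
    ∃ i : ℕ, i ≤ N ∧ x ∈ Icc (a + i * h) (a + i * h + h) := by
  have hq : 0 ≤ (x - a) / h := div_nonneg (by linarith [hx.1]) hh.le
  refine ⟨⌊(x - a) / h⌋₊, Nat.floor_le_of_le ?_, ?_, ?_⟩
  · rw [div_le_iff₀ hh]; linarith [hx.2]
  · have := (le_div_iff₀ hh).1 (Nat.floor_le hq); linarith
  · have := (div_lt_iff₀ hh).1 (Nat.lt_floor_add_one ((x - a) / h)); linarith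

/-- At the right end of the `i`-th piece the floor picks `g (i + 1)`, which `hg` makes agree with
`g i`. -/
theorem apply_nat_floor_div_eq_of_mem_Icc {α : Type*} {g : ℕ → ℝ → α} {a h x : ℝ} (hh : 0 < h)
    (hg : ∀ i : ℕ, g i (a + i * h + h) = g (i + 1) (a + i * h + h)) {i : ℕ}
    (hx : x ∈ Icc (a + i * h) (a + i * h + h)) : g ⌊(x - a) / h⌋₊ x = g i x := by
  have hih : 0 ≤ (i : ℝ) * h := by positivity
  rcases hx.2.lt_or_eq with hlt | rfl
  · congr
    rw [Nat.floor_eq_iff (div_nonneg (by linarith [hx.1]) hh.le), le_div_iff₀ hh,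
      div_lt_iff₀ hh]
    constructor <;> linarith [hx.1]
  · have : (a + i * h + h - a) / h = ((i + 1 : ℕ) : ℝ) := by
      push_cast; field_simp; ring
    rw [this, Nat.floor_natCast, hg]

theorem GeodesicSpace.exists_const_speed {s h : ℝ} (hX : GeodesicSpace X) (x y : X) (hh : 0 < h) :
    ∃ g : ℝ → X, g s = x ∧ g (s + h) = y ∧
      ∀ u ∈ Icc s (s + h), ∀ v ∈ Icc s (s + h), dist (g u) (g v) = dist x y / h * dist u v := by
  obtain ⟨-, f, hf₀, hf₁, hf, -⟩ := hX x y
  have hmem : ∀ u ∈ Icc s (s + h), (u - s) / h * dist x y ∈ Icc 0 (dist x y) := fun u hu =>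
    ⟨by have := hu.1; positivity,
      mul_le_of_le_one_left dist_nonneg ((div_le_one hh).2 (by linarith [hu.2]))⟩
  refine ⟨fun u => f ((u - s) / h * dist x y), by simpa using hf₀, ?_, fun u hu v hv => ?_⟩
  · simpa [hh.ne'] using hf₁
  · rw [hf _ (hmem u hu) _ (hmem v hv), ← sub_mul, ← sub_div, sub_sub_sub_cancel_right,
      abs_mul, abs_div, abs_of_pos hh, abs_of_nonneg dist_nonneg, Real.dist_eq]
    ring

theorem GeodesicSpace.exists_lipschitzOnWith_interpolation (hX : GeodesicSpace X) {a h : ℝ}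
    (hh : 0 < h) {K : ℝ≥0} {N : ℕ} {p : ℕ → X} (hp : ∀ i < N, dist (p i) (p (i + 1)) ≤ K * h) :
    ∃ d : ℝ → X, (∀ i ≤ N, d (a + i * h) = p i) ∧ LipschitzOnWith K d (Icc a (a + N * h)) := by
  choose g hg₀ hg₁ hg using fun i : ℕ =>
    hX.exists_const_speed (s := a + i * h) (p i) (p (i + 1)) hh
  have hshift : ∀ i : ℕ, a + ((i + 1 : ℕ) : ℝ) * h = a + i * h + h := fun i => by push_cast; ring
  have hglue : ∀ i : ℕ, g i (a + i * h + h) = g (i + 1) (a + i * h + h) := fun i => by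
    rw [hg₁, ← hshift, hg₀]
  refine ⟨fun x => g ⌊(x - a) / h⌋₊ x, fun i _ => ?_, ?_⟩
  · exact (apply_nat_floor_div_eq_of_mem_Icc hh hglue ⟨le_rfl, by linarith⟩).trans (hg₀ i)
  · have := LipschitzOnWith.Icc_of_forall_Icc_succ (f := fun x => g ⌊(x - a) / h⌋₊ x)
      (t := fun i : ℕ => a + i * h) (N := N) (K := K) fun i hi => by
        refine LipschitzOnWith.of_dist_le_mul fun x hx y hy => ?_
        rw [hshift] at hx hy
        simp only [apply_nat_floor_div_eq_of_mem_Icc hh hglue hx,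
          apply_nat_floor_div_eq_of_mem_Icc hh hglue hy, hg i x hx y hy]
        gcongr
        exact (div_le_iff₀ hh).2 (hp i hi)
    simpa using this

theorem GeodesicSpace.exists_lipschitzOnWith_near (hX : GeodesicSpace X) {a b lam C : ℝ}
    {c : ℝ → X} (hlam : 0 ≤ lam) (hC : 0 < C) (hlong : C ≤ lam * (b - a))
    (hup : ∀ x ∈ Icc a b, ∀ y ∈ Icc a b, dist (c x) (c y) ≤ lam * |y - x| + C) :
    ∃ d : ℝ → X, d a = c a ∧ d b = c b ∧ (∀ x ∈ Icc a b, dist (c x) (d x) ≤ 8 * C) ∧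
      LipschitzOnWith (2 * lam).toNNReal d (Icc a b) := by
  obtain ⟨N, hN, hstep₁, hstep₂⟩ := exists_nat_div_mem_Icc hC hlong
  have hNR : (0 : ℝ) < N := by exact_mod_cast hN
  set h := (b - a) / N with h_def
  have hlamh : lam * (b - a) / N = lam * h := mul_div_assoc _ _ _
  rw [hlamh] at hstep₁ hstep₂
  have hh : 0 < h := pos_of_mul_pos_right (hC.trans_le hstep₁) hlam
  have hb : a + N * h = b := by rw [h_def]; field_simp; ring
  have hmem : ∀ i : ℕ, i ≤ N → a + i * h ∈ Icc a b := fun i hi => by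
    rw [← hb]
    constructor
    · have : 0 ≤ (i : ℝ) * h := by positivity
      linarith
    · gcongr
  have hup_near : ∀ x ∈ Icc a b, ∀ y ∈ Icc a b, |y - x| ≤ h → dist (c x) (c y) ≤ lam * h + C :=
    fun x hx y hy hxy => (hup x hx y hy).trans (by gcongr)
  have hK : ((2 * lam).toNNReal : ℝ) = 2 * lam := Real.coe_toNNReal _ (by positivity)
  have hp : ∀ i < N, dist (c (a + i * h)) (c (a + (i + 1 : ℕ) * h)) ≤ (2 * lam).toNNReal * h :=
    fun i hi => by
      refine (hup_near _ (hmem i hi.le) _ (hmem (i + 1) hi) (le_of_eq ?_)).trans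
        (by rw [hK]; linarith)
      rw [abs_of_pos] <;> push_cast <;> linarith
  obtain ⟨d, hd, hlip⟩ := hX.exists_lipschitzOnWith_interpolation (a := a) hh hp
  rw [hb] at hlip
  refine ⟨d, by simpa using hd 0 (Nat.zero_le _), by simpa [hb] using hd N le_rfl,
    fun x hx => ?_, hlip⟩
  obtain ⟨i, hiN, hxi⟩ := exists_nat_le_mem_Icc hh (hb ▸ hx)
  have hxi' : |x - (a + i * h)| ≤ h := by
    rw [abs_of_nonneg] <;> linarith [hxi.1, hxi.2]
  calc dist (c x) (d x) ≤ dist (c x) (c (a + i * h)) + dist (d (a + i * h)) (d x) := by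
        rw [hd i hiN]; exact dist_triangle _ _ _
    _ ≤ (lam * h + C) + 2 * lam * h := by
        gcongr
        · exact hup_near x hx _ (hmem i hiN) (by rwa [abs_sub_comm])
        · refine (hlip.dist_le_mul _ (hmem i hiN) x hx).trans ?_
          rw [hK, Real.dist_eq, abs_sub_comm]
          gcongr
    _ ≤ 8 * C := by linarith

theorem QuasiIsometryOn.of_dist_le {lam C D : ℝ} {s : Set ℝ} {c d : ℝ → X}
    (hc : QuasiIsometryOn lam C s c) (hD : 0 ≤ D) (hcd : ∀ x ∈ s, dist (c x) (d x) ≤ D) :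
    QuasiIsometryOn lam (C + 2 * D) s d := by
  obtain ⟨hlam, hC, hqi⟩ := hc
  refine ⟨hlam, by positivity, fun x hx y hy => ⟨?_, ?_⟩⟩
  · have := dist_triangle4 (c x) (d x) (d y) (c y)
    rw [dist_comm (d y) (c y)] at this
    linarith [(hqi x hx y hy).1, hcd x hx, hcd y hy]
  · have := dist_triangle4 (d x) (c x) (c y) (d y)
    rw [dist_comm (d x) (c x)] at this
    linarith [(hqi x hx y hy).2, hcd x hx, hcd y hy]

theorem QuasiIsometryOn.exists_lipschitzOnWith_near (hX : GeodesicSpace X) {a b lam C : ℝ}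
    {c : ℝ → X} (hc : QuasiIsometryOn lam C (Icc a b) c) (hab : 2 * C ≤ dist (c a) (c b)) :
    ∃ d : ℝ → X, d a = c a ∧ d b = c b ∧ (∀ x ∈ Icc a b, dist (c x) (d x) ≤ 8 * C) ∧
      LipschitzOnWith (2 * lam).toNNReal d (Icc a b) := by
  obtain ⟨hlam, hC, hqi⟩ := hc
  rcases hC.eq_or_lt with rfl | hCpos
  · refine ⟨c, rfl, rfl, by simp, LipschitzOnWith.of_dist_le_mul fun x hx y hy => ?_⟩
    rw [Real.coe_toNNReal _ (by positivity), Real.dist_eq, abs_sub_comm]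
    nlinarith [(hqi x hx y hy).2, abs_nonneg (y - x)]
  rcases lt_or_ge b a with hba | hab'
  · simp only [Icc_eq_empty_of_lt hba]
    exact ⟨c, rfl, rfl, by simp, lipschitzOnWith_empty _ _⟩
  refine hX.exists_lipschitzOnWith_near (by positivity) hCpos ?_ fun x hx y hy => (hqi x hx y hy).2
  have := (hqi a (left_mem_Icc.2 hab') b (right_mem_Icc.2 hab')).2
  rw [abs_of_nonneg (sub_nonneg.2 hab')] at this
  linarith

theorem quasi_geodesic_made_lipschitz
    (hX : GeodesicSpace X) {a b lam C : ℝ} {c : ℝ → X}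
    (hc : QuasiIsometryOn lam C (Icc a b) c)
    (hab : dist (c a) (c b) ≥ 2 * C) :
    ∃ d : ℝ → X, ContinuousOn d (Icc a b) ∧ d a = c a ∧ d b = c b ∧
      (∀ x ∈ Icc a b, dist (c x) (d x) ≤ 8 * C) ∧
      QuasiIsometryOn lam (17 * C) (Icc a b) d ∧
      (∀ x ∈ Icc a b, ∀ y ∈ Icc a b, dist (d x) (d y) ≤ 2 * lam * |y - x|) := by
  obtain ⟨d, hda, hdb, hclose, hlip⟩ := hc.exists_lipschitzOnWith_near hX hab
  refine ⟨d, hlip.continuousOn, hda, hdb, hclose, ?_, fun x hx y hy => ?_⟩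
  · convert hc.of_dist_le (by linarith [hc.2.1]) hclose using 1
    ring
  · have := hlip.dist_le_mul x hx y hy
    rwa [Real.coe_toNNReal _ (by linarith [hc.1]), Real.dist_eq, abs_sub_comm] at this
end
end

section
/- Let X be a δ-hyperbolic geodesic space and G ⊆ X a K-quasiconvex set. Let f : [a,b] → X be continuous, and for each t let p(t) be a closest-point projection of f(t) on G. Then for any d with 4δ + 2K ≤ d ≤ d(p(a), p(b)), there exists t ∈ [a,b] such that d(p(a), p(t)) ∈ [d − 4δ − 2K, d] and d(p(a), p(s)) ≤ d for all s ∈ [a,t]. (Closest-point projections of connected sets on K-quasiconvex sets have gaps of size at most 4δ + 2K.) -/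
open Metric Set Real

noncomputable section

variable {X : Type*} [MetricSpace X]

/-! The closest point `P` of `x` on `G` and any `q ∈ G` span a geodesic that stays `K`-close to
`G`; by hyperbolicity it passes within `(P, q)_x + 2δ` of `x`, which forces
`d(x, P) + d(P, q) ≤ d(x, q) + 4δ + 2K`. Hence projections are coarsely `1`-Lipschitz, so along
the continuous path `f` the function `t ↦ d(p a, p t)` never jumps by more than `4δ + 2K`. Such a
function, starting at `0 ≤ d` and ending `≥ d`, lands in `[d - 4δ - 2K, d]` near the supremum of
the times up to which it stays `≤ d`. -/

open Filter Topology

def JumpsAtMost {α : Type*} [TopologicalSpace α] (C : ℝ) (s : Set α) (φ : α → ℝ) : Prop :=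
  ∀ t ∈ s, ∀ ε > 0, ∀ᶠ u in 𝓝[s] t, |φ u - φ t| < C + ε

theorem ContinuousOn.jumpsAtMost {α Y : Type*} [TopologicalSpace α] [PseudoMetricSpace Y]
    {F : α → Y} {s : Set α} (hF : ContinuousOn F s) {φ : α → ℝ} {C : ℝ}
    (hφ : ∀ u ∈ s, ∀ t ∈ s, |φ u - φ t| ≤ dist (F u) (F t) + C) : JumpsAtMost C s φ := by
  intro t ht ε hε
  filter_upwards [(hF t ht).eventually (ball_mem_nhds (F t) hε), self_mem_nhdsWithin]
    with u hu hus
  linarith [hφ u hus t ht, mem_ball.1 hu]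

namespace JumpsAtMost

section

variable {α : Type*} [TopologicalSpace α] {C : ℝ} {s : Set α} {φ : α → ℝ}

theorem eventually_lt (h : JumpsAtMost C s φ) {t : α} (ht : t ∈ s) {c : ℝ} (hc : φ t + C < c) :
    ∀ᶠ u in 𝓝[s] t, φ u < c := by
  filter_upwards [h t ht (c - φ t - C) (by linarith)] with u hu
  linarith [le_abs_self (φ u - φ t)]

theorem eventually_gt (h : JumpsAtMost C s φ) {t : α} (ht : t ∈ s) {c : ℝ} (hc : c < φ t - C) :
    ∀ᶠ u in 𝓝[s] t, c < φ u := by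
  filter_upwards [h t ht (φ t - C - c) (by linarith)] with u hu
  linarith [neg_abs_le (φ u - φ t)]

end

variable {C a b : ℝ} {φ : ℝ → ℝ}

theorem exists_Ioc_forall_lt (h : JumpsAtMost C (Icc a b) φ) {t c : ℝ} (ht : t ∈ Ico a b)
    (hc : φ t + C < c) : ∃ u ∈ Ioc t b, ∀ r ∈ Ioc t u, φ r < c := by
  have hle : 𝓝[>] t ≤ 𝓝[Icc a b] t := nhdsWithin_le_of_mem (Icc_mem_nhdsGT_of_mem ht)
  obtain ⟨u, htu, hsub⟩ := mem_nhdsGT_iff_exists_Ioc_subset.1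
    (hle ((h.eventually_lt (Ico_subset_Icc_self ht) hc).and self_mem_nhdsWithin))
  exact ⟨u, ⟨htu, (hsub ⟨htu, le_rfl⟩).2.2⟩, fun r hr => (hsub hr).1⟩

theorem exists_Ico_gt (h : JumpsAtMost C (Icc a b) φ) {t c : ℝ} (ht : t ∈ Ioc a b)
    (hc : c < φ t - C) : ∃ r ∈ Ico a t, c < φ r := by
  have hle : 𝓝[<] t ≤ 𝓝[Icc a b] t := nhdsWithin_le_of_mem (Icc_mem_nhdsLT_of_mem ht)
  obtain ⟨r, ⟨hcr, hr⟩, hrt⟩ :=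
    ((((h.eventually_gt (Ioc_subset_Icc_self ht) hc).and self_mem_nhdsWithin).filter_mono
      hle).and self_mem_nhdsWithin).exists
  exact ⟨r, ⟨hr.1, hrt⟩, hcr⟩

theorem exists_first_near_level (h : JumpsAtMost C (Icc a b) φ) (hC : 0 ≤ C) (hab : a ≤ b)
    {d : ℝ} (ha : φ a ≤ d) (hb : d ≤ φ b) :
    ∃ t ∈ Icc a b, φ t ∈ Icc (d - C) d ∧ ∀ s ∈ Icc a t, φ s ≤ d := by
  set S := {t ∈ Icc a b | ∀ s ∈ Icc a t, φ s ≤ d}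
  have haS : a ∈ S := ⟨⟨le_rfl, hab⟩, fun s hs => by rwa [le_antisymm hs.2 hs.1]⟩
  have hSb : ∀ t ∈ S, t ≤ b := fun t ht => ht.1.2
  set t₀ := sSup S
  have ht₀ : t₀ ∈ Icc a b := ⟨le_csSup ⟨b, hSb⟩ haS, csSup_le ⟨a, haS⟩ hSb⟩
  have hbelow : ∀ s ∈ Ico a t₀, φ s ≤ d := fun s hs => by
    obtain ⟨u, huS, hsu⟩ := exists_lt_of_lt_csSup ⟨a, haS⟩ hs.2
    exact huS.2 s ⟨hs.1, hsu.le⟩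
  by_cases hle : φ t₀ ≤ d
  · have hupto : ∀ s ∈ Icc a t₀, φ s ≤ d := fun s hs =>
      hs.2.lt_or_eq.elim (fun hst => hbelow s ⟨hs.1, hst⟩) (fun hst => hst ▸ hle)
    refine ⟨t₀, ht₀, ⟨?_, hle⟩, hupto⟩
    by_contra! hlow
    rcases ht₀.2.lt_or_eq with hlt | heq
    · obtain ⟨u, hu, hφu⟩ := h.exists_Ioc_forall_lt ⟨ht₀.1, hlt⟩ (by linarith : φ t₀ + C < d)
      have huS : u ∈ S := ⟨⟨ht₀.1.trans hu.1.le, hu.2⟩, fun s hs =>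
        (le_or_gt s t₀).elim (fun hst => hupto s ⟨hs.1, hst⟩) (fun hst => (hφu s ⟨hst, hs.2⟩).le)⟩
      exact (le_csSup ⟨b, hSb⟩ huS).not_gt hu.1
    · rw [heq] at hlow
      linarith
  · have ht₀a : a < t₀ := lt_of_le_of_ne ht₀.1 fun hat => hle (hat ▸ ha)
    obtain ⟨s, hs, hφs⟩ := h.exists_Ico_gt ⟨ht₀a, ht₀.2⟩ (by linarith : d - C < φ t₀ - C)
    exact ⟨s, ⟨hs.1, hs.2.le.trans ht₀.2⟩, ⟨hφs.le, hbelow s hs⟩,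
      fun r hr => hbelow r ⟨hr.1, hr.2.trans_lt hs.2⟩⟩

end JumpsAtMost

theorem GeodesicSegmentBetween.exists_dist_eq {Γ : Set X} {x y : X}
    (hΓ : GeodesicSegmentBetween Γ x y) {t : ℝ} (ht : t ∈ Icc 0 (dist x y)) :
    ∃ z ∈ Γ, dist x z = t ∧ dist z y = dist x y - t := by
  obtain ⟨g, hg0, hgL, hiso, rfl⟩ := hΓ
  refine ⟨g t, mem_image_of_mem g ht, ?_, ?_⟩
  · rw [← hg0, hiso 0 (left_mem_Icc.2 dist_nonneg) t ht, zero_sub, abs_neg, abs_of_nonneg ht.1]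
  · calc dist (g t) y = dist (g t) (g (dist x y)) := by rw [hgL]
      _ = dist x y - t := by
        rw [hiso t ht _ (right_mem_Icc.2 dist_nonneg), abs_of_nonpos (by linarith [ht.2])]
        ring

section Hyperbolic

variable {δ : ℝ}

theorem IsHyperbolic.dist_le_gromovProd_add (hδ : IsHyperbolic X δ) {x y z w : X}
    (hy : dist x y + dist y z = dist x z) (heq : gromovProd x y w = gromovProd y z w) :
    dist w y ≤ gromovProd x z w + 2 * δ := by
  have hyp := hδ x y z w
  rw [heq, min_self] at hyp
  simp only [gromovProd] at hyp heq ⊢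
  linarith [dist_comm w y]

theorem IsHyperbolic.exists_mem_dist_le_gromovProd_add (hδ : IsHyperbolic X δ) {Γ : Set X}
    {x y : X} (hΓ : GeodesicSegmentBetween Γ x y) (w : X) :
    ∃ z ∈ Γ, dist w z ≤ gromovProd x y w + 2 * δ := by
  obtain ⟨z, hz, hxz, hzy⟩ := hΓ.exists_dist_eq (t := (dist x y + dist x w - dist y w) / 2)
    ⟨by linarith [dist_triangle y x w, dist_comm x y], by linarith [dist_triangle x y w]⟩
  refine ⟨z, hz, hδ.dist_le_gromovProd_add (by linarith) ?_⟩
  simp only [gromovProd]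
  rw [hxz, hzy]
  ring

variable {K : ℝ} {G : Set X}

theorem ProjOn.dist_add_dist_le (hδ : IsHyperbolic X δ) (hG : Quasiconvex K G) {P x q : X}
    (hP : ProjOn P x G) (hq : q ∈ G) : dist x P + dist P q ≤ dist x q + 4 * δ + 2 * K := by
  obtain ⟨Γ, hΓ, hΓG⟩ := hG P hP.1 q hq
  obtain ⟨z, hz, hxz⟩ := hδ.exists_mem_dist_le_gromovProd_add hΓ x
  have hxP : dist x P ≤ gromovProd P q x + 2 * δ + K := calc
    dist x P = infDist x G := hP.2
    _ ≤ infDist z G + dist x z := infDist_le_infDist_add_dist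
    _ ≤ gromovProd P q x + 2 * δ + K := by linarith [hΓG z hz]
  simp only [gromovProd] at hxP
  linarith [dist_comm x P, dist_comm x q]

theorem ProjOn.dist_le (hδ : IsHyperbolic X δ) (hG : Quasiconvex K G) {P Q x y : X}
    (hP : ProjOn P x G) (hQ : ProjOn Q y G) : dist P Q ≤ dist x y + 4 * δ + 2 * K := by
  linarith [hP.dist_add_dist_le hδ hG hQ.1, hQ.dist_add_dist_le hδ hG hP.1,
    dist_triangle x y Q, dist_triangle y x P, dist_comm P Q, dist_comm x y]

end Hyperbolic

theorem quasi_convex_projection_small_gaps_general {δ K : ℝ}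
    (hδ : IsHyperbolic X δ)
    {a b : ℝ} (hab : a ≤ b) {f : ℝ → X} (hf : ContinuousOn f (Icc a b))
    {G : Set X} (hG : Quasiconvex K G)
    {p : ℝ → X} (hp : ∀ t ∈ Icc a b, ProjOn (p t) (f t) G)
    {d : ℝ} (hd : d ∈ Icc (4 * δ + 2 * K) (dist (p a) (p b))) :
    ∃ t ∈ Icc a b, dist (p a) (p t) ∈ Icc (d - 4 * δ - 2 * K) d ∧
      ∀ s ∈ Icc a t, dist (p a) (p s) ≤ d := by
  have hpa := hp a ⟨le_rfl, hab⟩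
  have hC : 0 ≤ 4 * δ + 2 * K := by
    linarith [hpa.dist_add_dist_le hδ hG hpa.1, dist_self (p a)]
  have hjumps : JumpsAtMost (4 * δ + 2 * K) (Icc a b) (fun t => dist (p a) (p t)) :=
    hf.jumpsAtMost fun s hs t ht => calc
      |dist (p a) (p s) - dist (p a) (p t)| ≤ dist (p s) (p t) := by
        simpa only [dist_comm (p a)] using abs_dist_sub_le (p s) (p t) (p a)
      _ ≤ dist (f s) (f t) + (4 * δ + 2 * K) := by
        linarith [(hp s hs).dist_le hδ hG (hp t ht)]
  obtain ⟨t, ht, hnear, hbefore⟩ :=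
    hjumps.exists_first_near_level hC hab (by simpa using hC.trans hd.1) hd.2
  exact ⟨t, ht, by simpa only [sub_sub] using hnear, hbefore⟩

theorem quasi_convex_projection_small_gaps {δ K : ℝ}
    (hX : GeodesicSpace X) (hδ : IsHyperbolic X δ)
    {a b : ℝ} (hab : a ≤ b) {f : ℝ → X} (hf : ContinuousOn f (Icc a b))
    {G : Set X} (hG : Quasiconvex K G)
    {p : ℝ → X} (hp : ∀ t ∈ Icc a b, ProjOn (p t) (f t) G)
    {d : ℝ} (hd : d ∈ Icc (4 * δ + 2 * K) (dist (p a) (p b))) :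
    ∃ t ∈ Icc a b, dist (p a) (p t) ∈ Icc (d - 4 * δ - 2 * K) d ∧
      ∀ s ∈ Icc a t, dist (p a) (p s) ≤ d :=
  quasi_convex_projection_small_gaps_general hδ hab hf hG hp hd
end
end

section
/- Let X be a δ-hyperbolic geodesic space, f : [u⁻,u⁺] → X a continuous (λ,C)-quasi-isometric map, G a geodesic from f(u⁻) to f(u⁺), z ∈ [u⁻, u⁺], π_z a projection of f(z) on G, H a geodesic from π_z to f(z), and L > 0 with d(f(z), G) > L. If x ∈ [u⁻, z] and m⁺ ∈ [z, u⁺] are such that the closest-point projections on H of f(x) and f(m⁺) are both within distance L of π_z, and G' is a geodesic from f(x) to f(m⁺), then d(f(z), G) ≤ d(f(z), G') + L + 4δ. -/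
/-!
Both `f x` and `f mp` project onto `H` within `L` of `πz`, and on a geodesic a closest-point
projection `p` of `a` satisfies `d(a, p) + d(p, q) ≤ d(a, q) + 4δ` for every `q` on it. Hence
the Gromov products `(f x, πz)_{f z}` and `(πz, f mp)_{f z}` are at least
`d(f z, πz) - L - 2δ`, and the four-point condition at `f z` gives
`(f x, f mp)_{f z} ≥ d(f z, G) - L - 3δ`. A Gromov product of the endpoints of `G'` is at most
the distance to `G'`.
-/

open Metric Set Real

noncomputable section

variable {X : Type*} [MetricSpace X]

lemma exists_mem_Icc_abs_sub_eq {a b s t γ : ℝ} (hs : s ∈ Icc a b) (ht : t ∈ Icc a b)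
    (hγ₀ : 0 ≤ γ) (hγ : γ ≤ |s - t|) :
    ∃ r ∈ Icc a b, |s - r| = γ ∧ |r - t| = |s - t| - γ := by
  rcases le_total s t with hst | hst
  · rw [abs_of_nonpos (sub_nonpos.2 hst)] at hγ ⊢
    refine ⟨s + γ, ⟨by linarith [hs.1], by linarith [ht.2]⟩, ?_, ?_⟩
    · rw [abs_of_nonpos] <;> linarith
    · rw [abs_of_nonpos] <;> linarith
  · rw [abs_of_nonneg (sub_nonneg.2 hst)] at hγ ⊢
    refine ⟨s - γ, ⟨by linarith [ht.1], by linarith [hs.2]⟩, ?_, ?_⟩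
    · rw [abs_of_nonneg] <;> linarith
    · rw [abs_of_nonneg] <;> linarith

lemma gromovProd_comm (x y w : X) : gromovProd x y w = gromovProd y x w := by
  simp only [gromovProd, add_comm, dist_comm]

lemma gromovProd_nonneg (x y w : X) : 0 ≤ gromovProd x y w := by
  unfold gromovProd
  linarith [dist_triangle_right x y w]

lemma gromovProd_le_dist_right (x y w : X) : gromovProd x y w ≤ dist y w := by
  unfold gromovProd
  linarith [dist_triangle x y w]

lemma gromovProd_le_dist_of_dist_add_dist_eq {u v w : X} (h : dist u w + dist w v = dist u v)
    (a : X) : gromovProd u v a ≤ dist a w := by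
  unfold gromovProd
  linarith [dist_triangle u w a, dist_triangle v w a, dist_comm v w, dist_comm w a]

namespace GeodesicSegmentBetween

variable {S : Set X} {u v : X}

lemma right_mem (h : GeodesicSegmentBetween S u v) : v ∈ S := by
  obtain ⟨g, -, hgv, -, rfl⟩ := h
  exact ⟨dist u v, ⟨dist_nonneg, le_rfl⟩, hgv⟩

lemma dist_add_dist_eq (h : GeodesicSegmentBetween S u v) {w : X} (hw : w ∈ S) :
    dist u w + dist w v = dist u v := by
  obtain ⟨g, hgu, hgv, hiso, rfl⟩ := h
  obtain ⟨t, ht, rfl⟩ := hw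
  have h₀ : (0 : ℝ) ∈ Icc 0 (dist u v) := ⟨le_rfl, dist_nonneg⟩
  have h₁ : dist u v ∈ Icc 0 (dist u v) := ⟨dist_nonneg, le_rfl⟩
  have hut := hiso 0 h₀ t ht
  have htv := hiso t ht _ h₁
  rw [hgu] at hut
  rw [hgv] at htv
  rw [hut, htv, abs_of_nonpos (by linarith [ht.1]), abs_of_nonpos (by linarith [ht.2])]
  ring

lemma gromovProd_le_infDist (h : GeodesicSegmentBetween S u v) (a : X) :
    gromovProd u v a ≤ infDist a S :=
  (le_infDist ⟨v, h.right_mem⟩).2 fun _ hw =>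
    gromovProd_le_dist_of_dist_add_dist_eq (h.dist_add_dist_eq hw) a

lemma exists_mem_dist_eq (h : GeodesicSegmentBetween S u v) {p q : X} (hp : p ∈ S)
    (hq : q ∈ S) {γ : ℝ} (hγ₀ : 0 ≤ γ) (hγ : γ ≤ dist p q) :
    ∃ m ∈ S, dist p m = γ ∧ dist m q = dist p q - γ := by
  obtain ⟨g, -, -, hiso, rfl⟩ := h
  obtain ⟨s, hs, rfl⟩ := hp
  obtain ⟨t, ht, rfl⟩ := hq
  rw [hiso s hs t ht] at hγ ⊢
  obtain ⟨r, hr, hsr, hrt⟩ := exists_mem_Icc_abs_sub_eq hs ht hγ₀ hγ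
  exact ⟨g r, mem_image_of_mem g hr, by rw [hiso s hs r hr, hsr], by rw [hiso r hr t ht, hrt]⟩

end GeodesicSegmentBetween

namespace IsHyperbolic

variable {δ : ℝ}

lemma nonneg (hδ : IsHyperbolic X δ) (a : X) : 0 ≤ δ := by
  have := hδ a a a a
  simp only [gromovProd, dist_self, min_self] at this
  linarith

/-- `m` is the point of the side `[p, q]` of the triangle `a p q` at which the inscribed
tripod touches it. -/
lemma dist_le_gromovProd_of_internal_point (hδ : IsHyperbolic X δ) {a p q m : X}
    (hpm : dist p m = gromovProd a q p) (hmq : dist m q = dist p q - gromovProd a q p) :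
    dist a m ≤ gromovProd p q a + 2 * δ := by
  have hyp := hδ p m q a
  have hpm_a : gromovProd p m a = (dist m a + gromovProd p q a) / 2 := by
    simp only [gromovProd] at hpm ⊢
    rw [hpm, dist_comm q p, dist_comm a p, dist_comm a q]
    ring
  have hmq_a : gromovProd m q a = (dist m a + gromovProd p q a) / 2 := by
    simp only [gromovProd] at hmq ⊢
    rw [hmq, dist_comm q p, dist_comm a p, dist_comm a q]
    ring
  rw [hpm_a, hmq_a, min_self] at hyp
  linarith [dist_comm a m]

lemma dist_add_dist_le_of_projOn (hδ : IsHyperbolic X δ) {S : Set X} {u v p q a : X}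
    (hS : GeodesicSegmentBetween S u v) (hp : ProjOn p a S) (hq : q ∈ S) :
    dist a p + dist p q ≤ dist a q + 4 * δ := by
  obtain ⟨m, hmS, hpm, hmq⟩ := hS.exists_mem_dist_eq hp.1 hq (gromovProd_nonneg a q p)
    (dist_comm q p ▸ gromovProd_le_dist_right a q p)
  have hclose := hδ.dist_le_gromovProd_of_internal_point hpm hmq
  have hproj : dist a p ≤ dist a m := hp.2 ▸ infDist_le_dist_of_mem hmS
  unfold gromovProd at hclose
  linarith [dist_comm p a, dist_comm q a]

lemma sub_le_gromovProd_of_projOn (hδ : IsHyperbolic X δ) {S : Set X} {u v p q a b : X}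
    {L : ℝ} (hS : GeodesicSegmentBetween S u v) (hp : ProjOn p a S) (hq : q ∈ S)
    (hpb : dist p b ≤ L) :
    dist b q - L - 2 * δ ≤ gromovProd a b q := by
  have hpq := hδ.dist_add_dist_le_of_projOn hS hp hq
  unfold gromovProd
  linarith [dist_triangle a p b, dist_triangle b p q, dist_comm b p]

end IsHyperbolic

theorem dist_to_geodesic_reduction_general {δ L : ℝ}
    (hδ : IsHyperbolic X δ)
    {z x mp : ℝ} {f : ℝ → X}
    {G H G' : Set X} {πz px pm : X}
    (hπ : ProjOn πz (f z) G)
    (hH : GeodesicSegmentBetween H πz (f z))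
    (hpx : ProjOn px (f x) H) (hpm : ProjOn pm (f mp) H)
    (hpxL : dist px πz ≤ L) (hpmL : dist pm πz ≤ L)
    (hG' : GeodesicSegmentBetween G' (f x) (f mp)) :
    infDist (f z) G ≤ infDist (f z) G' + L + 4 * δ := by
  have hx := hδ.sub_le_gromovProd_of_projOn hH hpx hH.right_mem hpxL
  have hm := hδ.sub_le_gromovProd_of_projOn hH hpm hH.right_mem hpmL
  rw [gromovProd_comm] at hm
  have hfour := (le_min hx hm).trans (sub_le_iff_le_add.1 (hδ (f x) πz (f mp) (f z)))
  have hG'_far := hG'.gromovProd_le_infDist (f z)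
  rw [← hπ.2, dist_comm]
  linarith [hδ.nonneg (f z)]

theorem dist_to_geodesic_reduction {δ lam C L : ℝ}
    (hX : GeodesicSpace X) (hδ : IsHyperbolic X δ)
    {um up z x mp : ℝ} {f : ℝ → X}
    (hf : QuasiIsometryOn lam C (Icc um up) f)
    (hcont : ContinuousOn f (Icc um up))
    (hz : z ∈ Icc um up)
    {G H G' : Set X} {πz px pm : X}
    (hG : GeodesicSegmentBetween G (f um) (f up))
    (hπ : ProjOn πz (f z) G)
    (hH : GeodesicSegmentBetween H πz (f z))
    (hL : 0 < L) (hfar : L < infDist (f z) G)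
    (hx : x ∈ Icc um z) (hm : mp ∈ Icc z up)
    (hpx : ProjOn px (f x) H) (hpm : ProjOn pm (f mp) H)
    (hpxL : dist px πz ≤ L) (hpmL : dist pm πz ≤ L)
    (hG' : GeodesicSegmentBetween G' (f x) (f mp)) :
    infDist (f z) G ≤ infDist (f z) G' + L + 4 * δ :=
  dist_to_geodesic_reduction_general hδ hπ hH hpx hpm hpxL hpmL hG'
end
end

section
/- Let H be a geodesic from π to q in a δ-hyperbolic geodesic space. For k ≥ 0 and d⁻ > 0, let V_k be the (2^k − 1)d⁻-neighborhood of H. For a point x with closest-point projection p₀(x) on H, let p_k(x) be the point on a geodesic from p₀(x) to x at distance min((2^k − 1)d⁻, d(p₀(x), x)) from p₀(x). Then p_k(x) is a closest-point projection of x on V_k, and for k ≤ ℓ, p_k(x) is a closest-point projection of p_ℓ(x) on V_k. -/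
open Metric Set Real

noncomputable section

variable {X : Type*} [MetricSpace X]

/-! In any metric space, if `p₀` is a closest point of `H` to `x`,
then every point of `V_r = {y | infDist y H ≤ r}` is at distance at least `d(x, H) - r` from `x`,
and the point of a geodesic from `p₀` to `x` at distance `r` from `p₀` attains this bound. Since
`p₀` stays a closest point of `H` to every point of that geodesic, the same applies with `x`
replaced by `p_ℓ(x)`, and `p_k(p_ℓ(x)) = p_k(x)` for `k ≤ ℓ`. -/

namespace ProjOn

variable {p x : X} {Y : Set X}

lemma of_forall_dist_le (hp : p ∈ Y) (h : ∀ y ∈ Y, dist x p ≤ dist x y) : ProjOn p x Y :=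
  ⟨hp, le_antisymm ((le_infDist ⟨p, hp⟩).2 h) (infDist_le_dist_of_mem hp)⟩

end ProjOn

section GeodesicToProjection

variable {H : Set X} {p₀ : X} {c : ℝ → X} {D : ℝ}

lemma infDist_sub_le_dist_of_infDist_le {x y : X} {r : ℝ} (hy : infDist y H ≤ r) :
    infDist x H - r ≤ dist x y := by
  linarith [infDist_le_infDist_add_dist (x := x) (y := y) (s := H)]

variable (hc : ∀ s ∈ Icc 0 D, ∀ t ∈ Icc 0 D, dist (c s) (c t) = |s - t|)
include hc

lemma dist_geodesic_eq_sub {s t : ℝ} (hs : 0 ≤ s) (hst : s ≤ t) (ht : t ≤ D) :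
    dist (c t) (c s) = t - s := by
  rw [hc t ⟨hs.trans hst, ht⟩ s ⟨hs, hst.trans ht⟩, abs_of_nonneg (sub_nonneg.2 hst)]

lemma ProjOn.of_mem_geodesic (hc0 : c 0 = p₀) (hp₀ : ProjOn p₀ (c D) H) {s : ℝ}
    (hs : s ∈ Icc 0 D) : ProjOn p₀ (c s) H := by
  have hD : 0 ≤ D := hs.1.trans hs.2
  have hs₀ : dist (c s) p₀ = s := by
    simpa [hc0] using dist_geodesic_eq_sub hc le_rfl hs.1 hs.2
  have hD₀ : infDist (c D) H = D := by
    simpa [hc0, hp₀.2] using dist_geodesic_eq_sub hc le_rfl hD le_rfl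
  have hDs : dist (c D) (c s) = D - s := dist_geodesic_eq_sub hc hs.1 hs.2 le_rfl
  refine ⟨hp₀.1, le_antisymm ?_ (infDist_le_dist_of_mem hp₀.1)⟩
  linarith [infDist_le_infDist_add_dist (x := c D) (y := c s) (s := H)]

lemma projOn_neighborhood_of_geodesic (hc0 : c 0 = p₀) {s r : ℝ} (hs : s ∈ Icc 0 D)
    (hr : 0 ≤ r) (hp₀ : ProjOn p₀ (c s) H) :
    ProjOn (c (min r s)) (c s) {y | infDist y H ≤ r} := by
  have hm : 0 ≤ min r s := le_min hr hs.1
  have hm₀ : dist (c (min r s)) p₀ = min r s := by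
    simpa [hc0] using dist_geodesic_eq_sub hc le_rfl hm ((min_le_right r s).trans hs.2)
  have hs₀ : infDist (c s) H = s := by
    simpa [hc0, hp₀.2] using dist_geodesic_eq_sub hc le_rfl hs.1 hs.2
  have hsm : dist (c s) (c (min r s)) = s - min r s :=
    dist_geodesic_eq_sub hc hm (min_le_right r s) hs.2
  refine ProjOn.of_forall_dist_le ?_ fun y hy => ?_
  · calc infDist (c (min r s)) H ≤ dist (c (min r s)) p₀ := infDist_le_dist_of_mem hp₀.1
      _ = min r s := hm₀
      _ ≤ r := min_le_left r s
  · have hlow := infDist_sub_le_dist_of_infDist_le (x := c s) hy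
    rw [hsm]
    rcases le_total r s with hrs | hsr
    · rw [min_eq_left hrs]; linarith
    · rw [min_eq_right hsr, sub_self]; exact dist_nonneg

end GeodesicToProjection

theorem nested_projections_on_neighborhoods_general {dm : ℝ}
    (hdm : 0 < dm)
    {H : Set X} {x p₀ : X}
    (hp₀ : ProjOn p₀ x H)
    {c : ℝ → X} (hc0 : c 0 = p₀) (hc1 : c (dist p₀ x) = x)
    (hciso : ∀ s ∈ Icc (0:ℝ) (dist p₀ x), ∀ t ∈ Icc (0:ℝ) (dist p₀ x),
      dist (c s) (c t) = |s - t|)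
    (pk : ℕ → X)
    (hpk : ∀ k : ℕ, pk k = c (min (((2:ℝ) ^ k - 1) * dm) (dist p₀ x))) :
    (∀ k : ℕ, ProjOn (pk k) x {y : X | infDist y H ≤ ((2:ℝ) ^ k - 1) * dm}) ∧
    (∀ k l : ℕ, k ≤ l →
      ProjOn (pk k) (pk l) {y : X | infDist y H ≤ ((2:ℝ) ^ k - 1) * dm}) := by
  set D := dist p₀ x
  have hr : Monotone fun k : ℕ => ((2:ℝ) ^ k - 1) * dm := fun k l hkl =>
    mul_le_mul_of_nonneg_right (sub_le_sub_right (pow_le_pow_right₀ one_le_two hkl) 1) hdm.le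
  have hr₀ (k : ℕ) : 0 ≤ ((2:ℝ) ^ k - 1) * dm := by simpa using hr (Nat.zero_le k)
  have hD : D ∈ Icc 0 D := ⟨dist_nonneg, le_rfl⟩
  rw [← hc1] at hp₀ ⊢
  have hproj (s : ℝ) (hs : s ∈ Icc 0 D) (k : ℕ) :=
    projOn_neighborhood_of_geodesic hciso hc0 hs (hr₀ k) (hp₀.of_mem_geodesic hciso hc0 hs)
  refine ⟨fun k => hpk k ▸ hproj D hD k, fun k l hkl => ?_⟩
  have hl : min (((2:ℝ) ^ l - 1) * dm) D ∈ Icc 0 D := ⟨le_min (hr₀ l) hD.1, min_le_right _ _⟩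
  have hkl' : min (((2:ℝ) ^ k - 1) * dm) (min (((2:ℝ) ^ l - 1) * dm) D)
      = min (((2:ℝ) ^ k - 1) * dm) D := by
    rw [← min_assoc, min_eq_left (hr hkl)]
  simpa only [hpk, hkl'] using hproj _ hl k

theorem nested_projections_on_neighborhoods {δ dm : ℝ}
    (hX : GeodesicSpace X) (hδ : IsHyperbolic X δ) (hdm : 0 < dm)
    {H : Set X} {pi0 q x p₀ : X}
    (hH : GeodesicSegmentBetween H pi0 q)
    (hp₀ : ProjOn p₀ x H)
    {c : ℝ → X} (hc0 : c 0 = p₀) (hc1 : c (dist p₀ x) = x)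
    (hciso : ∀ s ∈ Icc (0:ℝ) (dist p₀ x), ∀ t ∈ Icc (0:ℝ) (dist p₀ x),
      dist (c s) (c t) = |s - t|)
    (pk : ℕ → X)
    (hpk : ∀ k : ℕ, pk k = c (min (((2:ℝ) ^ k - 1) * dm) (dist p₀ x))) :
    (∀ k : ℕ, ProjOn (pk k) x {y : X | infDist y H ≤ ((2:ℝ) ^ k - 1) * dm}) ∧
    (∀ k l : ℕ, k ≤ l →
      ProjOn (pk k) (pk l) {y : X | infDist y H ≤ ((2:ℝ) ^ k - 1) * dm}) :=
  nested_projections_on_neighborhoods_general hdm hp₀ hc0 hc1 hciso pk hpk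
end
end
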